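/- Let (X, V) and (Y, W) be semi-coarse spaces, and suppose (X_i, V_i) ⊆ (X, V), i ∈ {1,…,n}, are subspaces (V_i = {V₀ ∩ (X_i × X_i) : V₀ ∈ V}) such that ⋃_{i=1}^n X_i = X and every set V₀ ∈ V can be written as V₀ = ⋃_{i=1}^n V_i with each V_i ∈ V_i. If f: X → Y is a map such that each restriction f|_{X_i}: (X_i, V_i) → (Y, W) is bornologous, then f: (X, V) → (Y, W) is bornologous. -/
import Mathlib


/-- Inverse of a relation: `A⁻¹ = {(y,x) : (x,y) ∈ A}`. -/
def SCinv {X : Type*} (A : Set (X × X)) : Set (X × X) := {p | (p.2, p.1) ∈ A}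

/-- A semi-coarse structure on `X`. -/
def IsSemiCoarse {X : Type*} (V : Set (Set (X × X))) : Prop :=
  Set.diagonal X ∈ V ∧
  (∀ A B : Set (X × X), B ∈ V → A ⊆ B → A ∈ V) ∧
  (∀ A B : Set (X × X), A ∈ V → B ∈ V → A ∪ B ∈ V) ∧
  (∀ A : Set (X × X), A ∈ V → SCinv A ∈ V)

/-- A function is bornologous if it maps controlled sets to controlled sets. -/
def Bornologous {X Y : Type*} (V : Set (Set (X × X))) (W : Set (Set (Y × Y)))
    (f : X → Y) : Prop :=
  ∀ A ∈ V, Prod.map f f '' A ∈ W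

/-- The subspace semi-coarse structure. -/
def SubspaceStruct {X : Type*} (V : Set (Set (X × X))) (Y : Set X) :
    Set (Set (↥Y × ↥Y)) :=
  (fun V₀ => Prod.map (Subtype.val) (Subtype.val) ⁻¹' V₀) '' V

theorem stmt19 {X Y : Type*} (V : Set (Set (X × X))) (W : Set (Set (Y × Y)))
    (hV : IsSemiCoarse V) (hW : IsSemiCoarse W)
    (n : ℕ) (Xs : Fin n → Set X)
    (hcover : (⋃ i, Xs i) = Set.univ)
    (hdecomp : ∀ V₀ ∈ V, ∃ Vs : (i : Fin n) → Set (↥(Xs i) × ↥(Xs i)),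
      (∀ i, Vs i ∈ SubspaceStruct V (Xs i)) ∧
      V₀ = ⋃ i, Prod.map (Subtype.val) (Subtype.val) '' Vs i)
    (f : X → Y)
    (hres : ∀ i, Bornologous (SubspaceStruct V (Xs i)) W
      (fun x : ↥(Xs i) => f x.val)) :
    Bornologous V W f := by
  intro A hA
  obtain ⟨Vs, hVs, hAeq⟩ := hdecomp A hA
  have key : ∀ i, Prod.map f f '' (Prod.map (Subtype.val) (Subtype.val) '' Vs i) ∈ W := by
    intro i
    have := hres i (Vs i) (hVs i)
    have heq : Prod.map f f '' (Prod.map (Subtype.val) (Subtype.val) '' Vs i)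
        = Prod.map (fun x : ↥(Xs i) => f x.val) (fun x : ↥(Xs i) => f x.val) '' Vs i := by
      rw [← Set.image_comp]; rfl
    rwa [heq]
  rw [hAeq, Set.image_iUnion]
  -- finite union of elements of W is in W
  obtain ⟨hdiag, hsub, hunion, -⟩ := hW
  have : ∀ (m : ℕ) (g : Fin m → Set (Y × Y)), (∀ i, g i ∈ W) → (⋃ i, g i) ∈ W := by
    intro m
    induction m with
    | zero =>
      intro g _
      exact hsub _ _ hdiag (by simp)
    | succ k ih =>
      intro g hg
      rw [show (⋃ i, g i) = g 0 ∪ ⋃ i : Fin k, g i.succ by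
        ext p; simp [Fin.exists_fin_succ]]
      exact hunion _ _ (hg 0) (ih _ (fun i => hg i.succ))
  exact this n _ (fun i => key i)
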